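/- Under assumptions (A1)-(A3), the dual-update block of the augmented Lagrangian satisfies, at every iteration t: L({x_k^{t+1}}, z^{t+1}, {y_k^{t+1}}) − L({x_k^{t+1}}, z^{t+1}, {y_k^t}) = Σ_{k=1}^K (1/ρ_k) Σ_{j∈N_k} ‖y_{kj}^{t+1} − y_{kj}^t‖², and this is at most Σ_{k=1}^K (L_k²(T_k+1)/ρ_k) Σ_{j∈N_k} Σ_{d=0}^{T_k} ‖z_j^{t+1−d} − z_j^{t−d}‖². -/

import Mathlib

open Filter Topology RealInnerProductSpace

noncomputable section

/-- Zero-padded restriction of a vector of nodal variables to a neighborhood: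
coordinates outside the neighborhood are set to zero. -/
def restr {K : ℕ} (Nk : Finset (Fin K)) (v : Fin K → ℝ) : EuclideanSpace ℝ (Fin K) :=
  WithLp.toLp 2 (fun j => if j ∈ Nk then v j else 0)

/-- The setting of the asynchronous proximal ADMM: network data, assumptions
(A1)-(A2), and the algorithmic update equations (i)-(iii) together with the
delay bounds and the update-frequency condition. -/
structure ProxADMM (K : ℕ) where
  /-- neighborhoods, `j ∈ Nb k` means `j ∈ N_k` -/
  Nb : Fin K → Finset (Fin K)
  self_mem : ∀ k, k ∈ Nb k
  symm : ∀ k j, j ∈ Nb k ↔ k ∈ Nb j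
  /-- local cost of node `k`, as a function of the zero-padded neighborhood variables -/
  g : Fin K → EuclideanSpace ℝ (Fin K) → ℝ
  g_local : ∀ k v w, (∀ j ∈ Nb k, v j = w j) → g k v = g k w
  /-- the Lipschitz constants of (A1) -/
  L : Fin K → ℝ
  L_pos : ∀ k, 0 < L k
  g_diff : ∀ k, Differentiable ℝ (g k)
  /-- (A1): the gradient of `g k` is `L k`-Lipschitz -/
  g_grad_lip : ∀ k v w, ‖gradient (g k) v - gradient (g k) w‖ ≤ L k * ‖v - w‖
  /-- the convex nonsmooth part -/
  h : Fin K → ℝ → ℝ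
  h_convex : ∀ k, ConvexOn ℝ Set.univ (h k)
  /-- the constraint sets -/
  Xs : Fin K → Set ℝ
  Xs_nonempty : ∀ k, (Xs k).Nonempty
  Xs_compact : ∀ k, IsCompact (Xs k)
  Xs_convex : ∀ k, Convex ℝ (Xs k)
  /-- (A2): `g k` is bounded below over the constraint set -/
  g_bddBelow : ∀ k, ∃ b, ∀ v : Fin K → ℝ, (∀ j, v j ∈ Xs j) → b ≤ g k (restr (Nb k) v)
  /-- penalty parameters -/
  ρ : Fin K → ℝ
  ρ_pos : ∀ k, 0 < ρ k
  /-- update frequencies `f_k` -/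
  freq : Fin K → ℝ
  freq_pos : ∀ k, 0 < freq k
  freq_le_one : ∀ k, freq k ≤ 1
  /-- maximum delays `T_k` -/
  Td : Fin K → ℕ
  /-- updating sets `S^t` -/
  Sset : ℕ → Finset (Fin K)
  /-- delayed index: `τ t k = [t+1]_k` -/
  τ : ℕ → Fin K → ℕ
  τ_le : ∀ t k, τ t k ≤ t + 1
  τ_ge : ∀ t k, t + 1 ≤ τ t k + Td k
  /-- iterates -/
  x : ℕ → Fin K → Fin K → ℝ
  z : ℕ → Fin K → ℝ
  y : ℕ → Fin K → Fin K → ℝ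
  z_init_mem : ∀ j, z 0 j ∈ Xs j
  /-- (i): feasibility of the `z`-update -/
  z_update_mem : ∀ t j, j ∈ Sset t → z (t + 1) j ∈ Xs j
  /-- (i): for `j ∈ S^t`, `z_j^{t+1}` minimizes the `j`-th block over `X_j` -/
  z_update_min : ∀ t j, j ∈ Sset t → IsMinOn
      (fun w => h j w + ∑ k ∈ Nb j, (y t k j * (x t k j - w) + ρ k / 2 * (x t k j - w) ^ 2))
      (Xs j) (z (t + 1) j)
  /-- (i): non-updating nodes keep their old value -/
  z_noupdate : ∀ t j, j ∉ Sset t → z (t + 1) j = z t j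
  /-- (ii): proximal (linearized) `x`-update with delayed gradient -/
  x_update : ∀ t k, ∀ j ∈ Nb k,
      x (t + 1) k j = z (t + 1) j
        - (1 / ρ k) * (gradient (g k) (restr (Nb k) (z (τ t k))) j + y t k j)
  /-- (iii): dual update -/
  y_update : ∀ t k, ∀ j ∈ Nb k,
      y (t + 1) k j = y t k j + ρ k * (x (t + 1) k j - z (t + 1) j)
  /-- in any window of `T` consecutive iterations node `k` updates at least `f_k T` times -/
  update_freq : ∀ k (t₀ T : ℕ),
      freq k * T ≤ ((Finset.Ico t₀ (t₀ + T)).filter (fun t => k ∈ Sset t)).card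

/-- The augmented Lagrangian. -/
def ProxADMM.Lag {K : ℕ} (P : ProxADMM K) (xx : Fin K → Fin K → ℝ) (zz : Fin K → ℝ)
    (yy : Fin K → Fin K → ℝ) : ℝ :=
  ∑ k, (P.g k (restr (P.Nb k) (xx k)) + P.h k (zz k)
    + ∑ j ∈ P.Nb k, (yy k j * (xx k j - zz j) + P.ρ k / 2 * (xx k j - zz j) ^ 2))

end

/-! Since the dual update is `y' = y + ρ(x - z)`, the change of the Lagrangian is
`Σ_k (1/ρ_k) ‖y_k' - y_k‖²`. Substituting the `x`-update into the dual update gives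
`y_k^{t+1} = -∇g_k(z^{[t+1]_k})`, so the dual change is a difference of gradients at two delayed
iterates, bounded by `L_k` times their distance. Both delayed indices lie in a window of
`T_k + 2` consecutive iterations, so telescoping and Cauchy–Schwarz bound the squared distance
by `T_k + 1` times the sum of the last `T_k + 1` squared increments of `z`. -/

open Finset

theorem sq_sub_le_card_mul_sum_sq_sub (f : ℕ → ℝ) {a b : ℕ} (hab : a ≤ b) :
    (f b - f a) ^ 2 ≤ (b - a : ℕ) * ∑ s ∈ Ico a b, (f (s + 1) - f s) ^ 2 := by
  rw [← sum_Ico_sub f hab, ← Nat.card_Ico]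
  exact sq_sum_le_card_mul_sum_sq

/-- The reflection `s ↦ t - s` embeds `[a, b)` into `[0, T]`. -/
theorem sum_Ico_sq_sub_le_sum_range (f : ℕ → ℝ) {t T a b : ℕ} (hb : b ≤ t + 1)
    (ha : t ≤ a + T) :
    ∑ s ∈ Ico a b, (f (s + 1) - f s) ^ 2
      ≤ ∑ d ∈ range (T + 1), (f (t + 1 - d) - f (t - d)) ^ 2 := by
  calc ∑ s ∈ Ico a b, (f (s + 1) - f s) ^ 2
      = ∑ s ∈ Ico a b, (f (t + 1 - (t - s)) - f (t - (t - s))) ^ 2 := by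
        refine sum_congr rfl fun s hs => ?_
        rw [mem_Ico] at hs
        rw [show t + 1 - (t - s) = s + 1 by omega, show t - (t - s) = s by omega]
    _ = ∑ d ∈ Ico (t + 1 - b) (t + 1 - a), (f (t + 1 - d) - f (t - d)) ^ 2 :=
        sum_Ico_reflect (fun d => (f (t + 1 - d) - f (t - d)) ^ 2) a hb
    _ ≤ ∑ d ∈ range (T + 1), (f (t + 1 - d) - f (t - d)) ^ 2 := by
        refine sum_le_sum_of_subset_of_nonneg ?_ fun _ _ _ => sq_nonneg _
        rw [range_eq_Ico]
        exact Ico_subset_Ico (Nat.zero_le _) (by omega)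

/-- `a` and `b` both lie in the window `[t - T, t + 1]`, hence at most `T + 1` steps apart. -/
theorem sq_sub_le_mul_sum_range (f : ℕ → ℝ) {t T a b : ℕ} (ha : a ≤ t + 1) (hb : b ≤ t + 1)
    (ha' : t ≤ a + T) (hb' : t ≤ b + T) :
    (f b - f a) ^ 2 ≤ (T + 1) * ∑ d ∈ range (T + 1), (f (t + 1 - d) - f (t - d)) ^ 2 := by
  wlog hab : a ≤ b generalizing a b
  · rw [← neg_sub, neg_sq]
    exact this hb ha hb' ha' (by omega)
  have hcard : ((b - a : ℕ) : ℝ) ≤ T + 1 := by exact_mod_cast (by omega : b - a ≤ T + 1)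
  calc (f b - f a) ^ 2 ≤ (b - a : ℕ) * ∑ s ∈ Ico a b, (f (s + 1) - f s) ^ 2 :=
        sq_sub_le_card_mul_sum_sq_sub f hab
    _ ≤ (T + 1) * ∑ d ∈ range (T + 1), (f (t + 1 - d) - f (t - d)) ^ 2 :=
        mul_le_mul hcard (sum_Ico_sq_sub_le_sum_range f hb ha')
          (sum_nonneg fun _ _ => sq_nonneg _) (by positivity)

theorem sum_sq_apply_le_norm_sq {ι : Type*} [Fintype ι] (v : EuclideanSpace ℝ ι)
    (s : Finset ι) : ∑ j ∈ s, v j ^ 2 ≤ ‖v‖ ^ 2 := by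
  rw [EuclideanSpace.real_norm_sq_eq]
  exact sum_le_sum_of_subset_of_nonneg (subset_univ s) fun _ _ _ => sq_nonneg _

theorem norm_restr_sub_sq {K : ℕ} (N : Finset (Fin K)) (u v : Fin K → ℝ) :
    ‖restr N u - restr N v‖ ^ 2 = ∑ j ∈ N, (u j - v j) ^ 2 := by
  rw [EuclideanSpace.real_norm_sq_eq, ← sum_subset (subset_univ N)]
  · refine sum_congr rfl fun j hj => ?_
    simp [restr, hj]
  · intro j _ hj
    simp [restr, hj]

namespace ProxADMM

variable {K : ℕ} (P : ProxADMM K)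

theorem Lag_sub_Lag_of_dual_step (xx : Fin K → Fin K → ℝ) (zz : Fin K → ℝ)
    (yy yy' : Fin K → Fin K → ℝ)
    (hy : ∀ k, ∀ j ∈ P.Nb k, yy' k j = yy k j + P.ρ k * (xx k j - zz j)) :
    P.Lag xx zz yy' - P.Lag xx zz yy
      = ∑ k, (1 / P.ρ k) * ∑ j ∈ P.Nb k, (yy' k j - yy k j) ^ 2 := by
  simp only [Lag, ← sum_sub_distrib, mul_sum]
  refine sum_congr rfl fun k _ => ?_
  rw [add_sub_add_left_eq_sub, ← sum_sub_distrib]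
  refine sum_congr rfl fun j hj => ?_
  have hρ : P.ρ k ≠ 0 := (P.ρ_pos k).ne'
  rw [hy k j hj]
  field_simp
  ring

theorem y_succ_eq_neg_gradient (t : ℕ) (k : Fin K) {j : Fin K} (hj : j ∈ P.Nb k) :
    P.y (t + 1) k j = -gradient (P.g k) (restr (P.Nb k) (P.z (P.τ t k))) j := by
  have hρ : P.ρ k ≠ 0 := (P.ρ_pos k).ne'
  rw [P.y_update t k j hj, P.x_update t k j hj]
  field_simp
  ring

theorem sum_sq_dual_step_le_delayed (t : ℕ) (k : Fin K) :
    ∑ j ∈ P.Nb k, (P.y (t + 2) k j - P.y (t + 1) k j) ^ 2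
      ≤ P.L k ^ 2 * ∑ j ∈ P.Nb k, (P.z (P.τ t k) j - P.z (P.τ (t + 1) k) j) ^ 2 := by
  set v := restr (P.Nb k) (P.z (P.τ (t + 1) k))
  set w := restr (P.Nb k) (P.z (P.τ t k))
  have hdual : ∀ j ∈ P.Nb k, P.y (t + 2) k j - P.y (t + 1) k j
      = (gradient (P.g k) w - gradient (P.g k) v) j := by
    intro j hj
    rw [P.y_succ_eq_neg_gradient (t + 1) k hj, P.y_succ_eq_neg_gradient t k hj]
    simp only [PiLp.sub_apply]
    ring
  calc ∑ j ∈ P.Nb k, (P.y (t + 2) k j - P.y (t + 1) k j) ^ 2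
      = ∑ j ∈ P.Nb k, (gradient (P.g k) w - gradient (P.g k) v) j ^ 2 :=
        sum_congr rfl fun j hj => by rw [hdual j hj]
    _ ≤ ‖gradient (P.g k) w - gradient (P.g k) v‖ ^ 2 := sum_sq_apply_le_norm_sq _ _
    _ ≤ (P.L k * ‖w - v‖) ^ 2 := pow_le_pow_left₀ (norm_nonneg _) (P.g_grad_lip k w v) 2
    _ = P.L k ^ 2 * ∑ j ∈ P.Nb k, (P.z (P.τ t k) j - P.z (P.τ (t + 1) k) j) ^ 2 := by
        rw [mul_pow, norm_restr_sub_sq]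

theorem sum_sq_dual_step_le (t : ℕ) (k : Fin K) :
    ∑ j ∈ P.Nb k, (P.y (t + 2) k j - P.y (t + 1) k j) ^ 2
      ≤ P.L k ^ 2 * ((P.Td k : ℝ) + 1) * ∑ j ∈ P.Nb k, ∑ d ∈ range (P.Td k + 1),
          (P.z (t + 2 - d) j - P.z (t + 1 - d) j) ^ 2 := by
  have hwindow : ∀ j, (P.z (P.τ t k) j - P.z (P.τ (t + 1) k) j) ^ 2
      ≤ ((P.Td k : ℝ) + 1) * ∑ d ∈ range (P.Td k + 1),
          (P.z (t + 2 - d) j - P.z (t + 1 - d) j) ^ 2 := fun j =>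
    sq_sub_le_mul_sum_range (fun s => P.z s j) (P.τ_le (t + 1) k) (by linarith [P.τ_le t k])
      (by linarith [P.τ_ge (t + 1) k]) (P.τ_ge t k)
  calc ∑ j ∈ P.Nb k, (P.y (t + 2) k j - P.y (t + 1) k j) ^ 2
      ≤ P.L k ^ 2 * ∑ j ∈ P.Nb k, (P.z (P.τ t k) j - P.z (P.τ (t + 1) k) j) ^ 2 :=
        P.sum_sq_dual_step_le_delayed t k
    _ ≤ P.L k ^ 2 * ∑ j ∈ P.Nb k, ((P.Td k : ℝ) + 1) * ∑ d ∈ range (P.Td k + 1),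
          (P.z (t + 2 - d) j - P.z (t + 1 - d) j) ^ 2 := by
        gcongr with j
        exact hwindow j
    _ = _ := by rw [← mul_sum, mul_assoc]

end ProxADMM

theorem prox_admm_dual_block_bound_general {K : ℕ} (P : ProxADMM K)
    (t : ℕ) (ht : 1 ≤ t) :
    P.Lag (P.x (t + 1)) (P.z (t + 1)) (P.y (t + 1))
        - P.Lag (P.x (t + 1)) (P.z (t + 1)) (P.y t)
      = ∑ k, (1 / P.ρ k) * ∑ j ∈ P.Nb k, ‖P.y (t + 1) k j - P.y t k j‖ ^ 2 ∧
    P.Lag (P.x (t + 1)) (P.z (t + 1)) (P.y (t + 1))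
        - P.Lag (P.x (t + 1)) (P.z (t + 1)) (P.y t)
      ≤ ∑ k, P.L k ^ 2 * ((P.Td k : ℝ) + 1) / P.ρ k *
          ∑ j ∈ P.Nb k, ∑ d ∈ Finset.range (P.Td k + 1),
            ‖P.z (t + 1 - d) j - P.z (t - d) j‖ ^ 2 := by
  obtain ⟨s, rfl⟩ : ∃ s, t = s + 1 := ⟨t - 1, by omega⟩
  have hdual := P.Lag_sub_Lag_of_dual_step (P.x (s + 2)) (P.z (s + 2)) (P.y (s + 1))
    (P.y (s + 2)) fun k j hj => P.y_update (s + 1) k j hj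
  simp only [Real.norm_eq_abs, sq_abs]
  refine ⟨hdual, hdual ▸ sum_le_sum fun k _ => ?_⟩
  rw [one_div_mul_eq_div, div_mul_eq_mul_div]
  exact div_le_div_of_nonneg_right (P.sum_sq_dual_step_le s k) (P.ρ_pos k).le

/-- Dual-update block of the augmented Lagrangian (asynchronous proximal ADMM,
assumptions (A1)-(A3)): the change due to the dual update equals
`Σ_k (1/ρ_k) Σ_{j∈N_k} ‖y_{kj}^{t+1} - y_{kj}^t‖²`, which is bounded by the
delayed `z`-differences. -/
theorem prox_admm_dual_block_bound {K : ℕ} (P : ProxADMM K)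
    (α β : Fin K → ℝ)
    (hα : ∀ k, α k = P.ρ k * P.freq k / 2
      - (7 * P.L k / (2 * P.ρ k ^ 2) + 1 / P.ρ k) * ((P.Nb k).card : ℝ) * P.L k ^ 2
          * ((P.Td k : ℝ) + 1) ^ 2
      - ((P.Nb k).card : ℝ) * P.L k * (P.Td k : ℝ) ^ 2 / 2)
    (hβ : ∀ k, β k = P.ρ k - 7 * P.L k)
    (hA3 : ∀ k, 0 < α k ∧ 0 < β k)
    (t : ℕ) (ht : 1 ≤ t) :
    P.Lag (P.x (t + 1)) (P.z (t + 1)) (P.y (t + 1))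
        - P.Lag (P.x (t + 1)) (P.z (t + 1)) (P.y t)
      = ∑ k, (1 / P.ρ k) * ∑ j ∈ P.Nb k, ‖P.y (t + 1) k j - P.y t k j‖ ^ 2 ∧
    P.Lag (P.x (t + 1)) (P.z (t + 1)) (P.y (t + 1))
        - P.Lag (P.x (t + 1)) (P.z (t + 1)) (P.y t)
      ≤ ∑ k, P.L k ^ 2 * ((P.Td k : ℝ) + 1) / P.ρ k *
          ∑ j ∈ P.Nb k, ∑ d ∈ Finset.range (P.Td k + 1),
            ‖P.z (t + 1 - d) j - P.z (t - d) j‖ ^ 2 :=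
  prox_admm_dual_block_bound_general P t ht
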